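/- arXiv:2003.09139 — 2 statements merged into one kernel-verified Lean document; each statement's English description precedes it below -/
import Mathlib

section
/- Let p be a prime, ν ≥ 1 an integer, χ ∈ {−1, 0, 1}, and let λ : ℕ → ℝ satisfy the Hecke relation λ(p^{m})λ(p) = λ(p^{m+1}) + λ(p^{m−1}) for m ≥ 1, λ(1) = 1, and the Deligne bound |λ(p^m)| ≤ m + 1 for all m ≥ 0. Define a(p^ν) := λ(p^ν) − (χ/√p) λ(p^{ν−1}). Then a(p^ν)² ≥ 1 + λ(p²) + λ(p⁴) + ⋯ + λ(p^{2ν}) − 4ν²/√p. -/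
theorem a_sq_lower_bound
    (p : ℕ) (hp : p.Prime) (ν : ℕ) (hν : 1 ≤ ν)
    (χ : ℝ) (hχ : χ = -1 ∨ χ = 0 ∨ χ = 1)
    (lam : ℕ → ℝ)
    (hone : lam 1 = 1)
    (hHecke : ∀ m : ℕ, 1 ≤ m →
      lam (p ^ m) * lam p = lam (p ^ (m + 1)) + lam (p ^ (m - 1)))
    (hDeligne : ∀ m : ℕ, |lam (p ^ m)| ≤ (m : ℝ) + 1) :
    (lam (p ^ ν) - χ / Real.sqrt p * lam (p ^ (ν - 1))) ^ 2 ≥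
      1 + (∑ μ ∈ Finset.Icc 1 ν, lam (p ^ (2 * μ))) - 4 * (ν : ℝ) ^ 2 / Real.sqrt p := by
  set f : ℕ → ℝ := fun m => lam (p ^ m) with hf
  have hf0 : f 0 = 1 := by simp [hf, hone]
  have hrec : ∀ m, 1 ≤ m → f m * f 1 = f (m + 1) + f (m - 1) := by
    intro m hm
    have := hHecke m hm
    simpa [hf, pow_one] using this
  have key : ∀ n, (∀ d, f (n + d) * f n = ∑ j ∈ Finset.range (n + 1), f (d + 2 * j)) ∧
      (∀ d, f (n + 1 + d) * f (n + 1) = ∑ j ∈ Finset.range (n + 2), f (d + 2 * j)) := by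
    intro n
    induction n with
    | zero =>
      refine ⟨fun d => by simp [hf0], fun d => ?_⟩
      have h := hrec (d + 1) (by omega)
      have e1 : d + 1 - 1 = d := by omega
      rw [e1] at h
      have e2 : 0 + 1 + d = d + 1 := by omega
      rw [e2, Finset.sum_range_succ, Finset.sum_range_one]
      simp only [mul_zero, add_zero, mul_one]
      linarith [h]
    | succ n ih =>
      refine ⟨ih.2, fun d => ?_⟩
      have h1 := hrec (n + 1) (by omega)
      have e1 : n + 1 - 1 = n := by omega
      rw [e1] at h1
      have hA := ih.2 (d + 1)
      have hB := ih.1 (d + 2)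
      have eA : n + 1 + (d + 1) = n + 1 + 1 + d := by omega
      have eB : n + (d + 2) = n + 1 + 1 + d := by omega
      rw [eA] at hA
      rw [eB] at hB
      have hC : ∀ j ∈ Finset.range (n + 2), f (d + 1 + 2 * j) * f 1
          = f (d + 2 + 2 * j) + f (d + 2 * j) := by
        intro j _
        have h := hrec (d + 1 + 2 * j) (by omega)
        have e2 : d + 1 + 2 * j + 1 = d + 2 + 2 * j := by omega
        have e3 : d + 1 + 2 * j - 1 = d + 2 * j := by omega
        rw [e2, e3] at h
        exact h
      have hsum : (∑ j ∈ Finset.range (n + 2), f (d + 1 + 2 * j)) * f 1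
          = (∑ j ∈ Finset.range (n + 2), f (d + 2 + 2 * j))
            + ∑ j ∈ Finset.range (n + 2), f (d + 2 * j) := by
        rw [Finset.sum_mul, ← Finset.sum_add_distrib]
        exact Finset.sum_congr rfl hC
      have hsplit : (∑ j ∈ Finset.range (n + 2), f (d + 2 + 2 * j))
          = (∑ j ∈ Finset.range (n + 1), f (d + 2 + 2 * j)) + f (d + 2 + 2 * (n + 1)) :=
        Finset.sum_range_succ _ _
      have hgoal : (∑ j ∈ Finset.range (n + 3), f (d + 2 * j))
          = (∑ j ∈ Finset.range (n + 2), f (d + 2 * j)) + f (d + 2 * (n + 2)) :=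
        Finset.sum_range_succ _ _
      have etop : d + 2 + 2 * (n + 1) = d + 2 * (n + 2) := by omega
      rw [etop] at hsplit
      have expand : f (n + 1 + 1 + d) * f (n + 2)
          = f (n + 1 + 1 + d) * (f (n + 1) * f 1) - f (n + 1 + 1 + d) * f n := by
        rw [h1]; ring
      calc f (n + 1 + 1 + d) * f (n + 1 + 1)
          = f (n + 1 + 1 + d) * (f (n + 1) * f 1) - f (n + 1 + 1 + d) * f n := expand
        _ = (∑ j ∈ Finset.range (n + 2), f (d + 1 + 2 * j)) * f 1
            - ∑ j ∈ Finset.range (n + 1), f (d + 2 + 2 * j) := by rw [← hA, ← hB]; ring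
        _ = ∑ j ∈ Finset.range (n + 3), f (d + 2 * j) := by
            rw [hsum, hgoal]; linarith [hsplit]
  have clebsch : f ν * f ν = ∑ j ∈ Finset.range (ν + 1), f (2 * j) := by
    have := (key ν).1 0
    simpa using this
  have hsum_eq : (∑ j ∈ Finset.range (ν + 1), f (2 * j))
      = 1 + ∑ μ ∈ Finset.Icc 1 ν, f (2 * μ) := by
    have hins : Finset.range (ν + 1) = insert 0 (Finset.Icc 1 ν) := by
      ext x; simp [Finset.mem_range, Finset.mem_Icc]; omega
    rw [hins, Finset.sum_insert (by simp)]
    simp [hf0]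
  have hfsq : f ν ^ 2 = 1 + ∑ μ ∈ Finset.Icc 1 ν, f (2 * μ) := by
    rw [sq, clebsch, hsum_eq]
  -- final inequality
  set s := Real.sqrt p with hs
  have hp2 : (2 : ℝ) ≤ p := by exact_mod_cast hp.two_le
  have hs1 : 1 ≤ s := by
    rw [hs, show (1:ℝ) = Real.sqrt 1 by simp]
    exact Real.sqrt_le_sqrt (by linarith)
  have hs0 : 0 < s := by linarith
  have hχ1 : |χ| ≤ 1 := by rcases hχ with h | h | h <;> simp [h]
  have hx : |f ν| ≤ (ν : ℝ) + 1 := hDeligne ν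
  have hy0 : |f (ν - 1)| ≤ (ν : ℝ) := by
    have := hDeligne (ν - 1)
    have e : ((ν - 1 : ℕ) : ℝ) + 1 = ν := by
      have : (ν : ℝ) ≥ 1 := by exact_mod_cast hν
      push_cast [hν]
      linarith
    rwa [e] at this
  set x := f ν
  set y := χ / s * f (ν - 1) with hy
  have hyabs : |y| ≤ (ν : ℝ) / s := by
    rw [hy, abs_mul, abs_div, abs_of_pos hs0]
    calc |χ| / s * |f (ν - 1)| ≤ 1 / s * (ν : ℝ) := by
          apply mul_le_mul (by gcongr) hy0 (abs_nonneg _) (by positivity)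
      _ = (ν : ℝ) / s := by ring
  have hxy : |x * y| ≤ ((ν : ℝ) + 1) * ((ν : ℝ) / s) := by
    rw [abs_mul]
    exact mul_le_mul hx hyabs (abs_nonneg _) (by positivity)
  have hν1 : (1 : ℝ) ≤ (ν : ℝ) := by exact_mod_cast hν
  have hstep : ((ν : ℝ) + 1) * ((ν : ℝ) / s) ≤ 2 * (ν : ℝ) ^ 2 / s := by
    rw [show ((ν : ℝ) + 1) * ((ν : ℝ) / s) = (((ν : ℝ) + 1) * (ν : ℝ)) / s by ring]
    rw [div_le_div_iff₀ hs0 hs0]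
    nlinarith [mul_nonneg (mul_nonneg hs0.le (sub_nonneg.mpr hν1)) (Nat.cast_nonneg ν : (0:ℝ) ≤ ν)]
  have hxy2 : x * y ≤ 2 * (ν : ℝ) ^ 2 / s := le_trans (le_abs_self _) (le_trans hxy hstep)
  have : (lam (p ^ ν) - χ / s * lam (p ^ (ν - 1))) = x - y := rfl
  rw [this]
  have hexp : (x - y) ^ 2 = x ^ 2 - 2 * (x * y) + y ^ 2 := by ring
  have hy2 : 0 ≤ y ^ 2 := sq_nonneg y
  have hfin : x ^ 2 = 1 + ∑ μ ∈ Finset.Icc 1 ν, lam (p ^ (2 * μ)) := hfsq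
  rw [ge_iff_le, ← hfin]
  have : 4 * (ν : ℝ) ^ 2 / s = 2 * (2 * (ν : ℝ) ^ 2 / s) := by ring
  rw [this]
  nlinarith [hxy2, hy2]
end

section
/- For every real x ≥ 2, the number of primes p ≤ x satisfies π(x) ≤ 10x/log x. -/
open Finset Nat

theorem chebyshev_pi_bound (x : ℝ) (hx : 2 ≤ x) :
    (Nat.primeCounting ⌊x⌋₊ : ℝ) ≤ 10 * x / Real.log x := by
  have hx0 : (0:ℝ) < x := by linarith
  have hlog : 0 < Real.log x := Real.log_pos (by linarith)
  set n := ⌊x⌋₊ with hn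
  set s := Real.sqrt x with hs
  have hs0 : 0 < s := Real.sqrt_pos.2 hx0
  have hs1 : 1 < s := by
    have : (1:ℝ) < Real.sqrt 2 := by
      rw [show (1:ℝ) = Real.sqrt 1 by simp]
      exact Real.sqrt_lt_sqrt (by norm_num) (by norm_num)
    calc (1:ℝ) < Real.sqrt 2 := this
    _ ≤ s := Real.sqrt_le_sqrt hx
  set m := ⌊s⌋₊ with hm
  set S : Finset ℕ := (range (n+1)).filter Nat.Prime with hS
  have hScard : S.card = Nat.primeCounting n := by
    rw [hS, ← Nat.primesBelow, Nat.primesBelow_card_eq_primeCounting',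
      ← Nat.primeCounting_sub_one]
    simp
  set A : Finset ℕ := S.filter (fun p => ¬ m < p) with hA
  set B : Finset ℕ := S.filter (fun p => m < p) with hB
  have hsplit : A.card + B.card = S.card := by
    rw [hA, hB, add_comm]
    exact Finset.card_filter_add_card_filter_not _
  -- small primes
  have hAcard : (A.card : ℝ) ≤ s := by
    have hsub : A ⊆ Finset.Ico 2 (m+1) := by
      intro p hp
      simp only [hA, hS, Finset.mem_filter, Finset.mem_range, not_lt] at hp
      exact Finset.mem_Ico.2 ⟨hp.1.2.two_le, Nat.lt_succ_of_le hp.2⟩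
    have : A.card ≤ m + 1 - 2 := by
      simpa using Finset.card_le_card hsub
    have h1 : A.card ≤ m := le_trans this (by omega)
    calc (A.card : ℝ) ≤ (m : ℝ) := by exact_mod_cast h1
    _ ≤ s := Nat.floor_le hs0.le
  -- big primes
  have hpow : (m+1)^B.card ≤ 4^n := by
    calc (m+1)^B.card ≤ ∏ p ∈ B, p := by
          apply Finset.pow_card_le_prod
          intro p hp
          simp only [hB, Finset.mem_filter] at hp
          omega
    _ ≤ ∏ p ∈ S, p := by
          apply Finset.prod_le_prod_of_subset_of_one_le' (Finset.filter_subset _ _)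
          intro p hp _
          exact ((Finset.mem_filter.1 hp).2).one_lt.le
    _ = primorial n := rfl
    _ ≤ 4^n := primorial_le_4_pow n
  have hBk : (B.card : ℝ) * Real.log s ≤ x * Real.log 4 := by
    have h1 : ((m:ℝ)+1)^B.card ≤ (4:ℝ)^n := by exact_mod_cast hpow
    have h2 : (4:ℝ)^n ≤ (4:ℝ)^x := by
      rw [← Real.rpow_natCast 4 n]
      apply Real.rpow_le_rpow_of_exponent_le (by norm_num)
      exact Nat.floor_le hx0.le
    have hsm : s ≤ (m:ℝ) + 1 := (Nat.lt_floor_add_one s).le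
    have h3 : s ^ B.card ≤ (4:ℝ)^x := by
      calc s ^ B.card ≤ ((m:ℝ)+1)^B.card := by
            apply pow_le_pow_left₀ hs0.le hsm
      _ ≤ (4:ℝ)^x := le_trans h1 h2
    have h4 := Real.log_le_log (by positivity) h3
    rwa [Real.log_pow, Real.log_rpow (by norm_num)] at h4
  have hlogs : Real.log s = Real.log x / 2 := by
    rw [hs, Real.log_sqrt hx0.le]
  have hBk2 : (B.card : ℝ) * Real.log x ≤ 2 * x * Real.log 4 := by
    rw [hlogs] at hBk; linarith
  -- combine
  have hπ : (Nat.primeCounting n : ℝ) = (A.card : ℝ) + (B.card : ℝ) := by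
    rw [← hScard, ← hsplit]; push_cast; ring
  rw [hπ]
  have hlogle : Real.log x ≤ 2 * s := by
    have : Real.log x = 2 * Real.log s := by rw [hlogs]; ring
    rw [this]
    have := Real.log_le_sub_one_of_pos hs0
    linarith
  have hss : s * s = x := Real.mul_self_sqrt hx0.le
  have hlog4 : Real.log 4 ≤ 3 := by
    have := Real.log_le_sub_one_of_pos (show (0:ℝ) < 4 by norm_num)
    linarith
  have hlog4' : 0 < Real.log 4 := Real.log_pos (by norm_num)
  rw [le_div_iff₀ hlog]
  have hA2 : (A.card : ℝ) * Real.log x ≤ 2 * x := by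
    calc (A.card : ℝ) * Real.log x ≤ s * (2 * s) :=
          mul_le_mul hAcard hlogle hlog.le hs0.le
    _ = 2 * x := by rw [← hss]; ring
  nlinarith [hBk2, hA2, hlog4, hx0]
end
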